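/- If A is an accretive n×n complex matrix, then det(Re A) ≤ |det A| (Ostrowski–Taussky inequality). -/

import Mathlib

open Matrix
open scoped ComplexOrder

noncomputable section
namespace Paper

variable {n : ℕ}

/-- Real part `(A + Aᴴ)/2`. -/
def re (A : Matrix (Fin n) (Fin n) ℂ) : Matrix (Fin n) (Fin n) ℂ := (2⁻¹ : ℂ) • (A + Aᴴ)

/-- Imaginary part `(A - Aᴴ)/(2i)`. -/
def im (A : Matrix (Fin n) (Fin n) ℂ) : Matrix (Fin n) (Fin n) ℂ :=
  (2 * Complex.I)⁻¹ • (A - Aᴴ)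

/-- The sector `S_α`. -/
def sector (α : ℝ) : Set ℂ := {z | 0 < z.re ∧ |z.im| ≤ z.re * Real.tan α}

/-- Numerical range of a matrix. -/
def numericalRange (A : Matrix (Fin n) (Fin n) ℂ) : Set ℂ :=
  {z | ∃ x : Fin n → ℂ, star x ⬝ᵥ x = 1 ∧ z = star x ⬝ᵥ (A *ᵥ x)}

/-- Loewner order: `X ≤ Y` iff `Y - X` is positive semidefinite. -/
def loewnerLE (X Y : Matrix (Fin n) (Fin n) ℂ) : Prop := (Y - X).PosSemidef

lemma re_isHermitian (A : Matrix (Fin n) (Fin n) ℂ) : (re A).IsHermitian := by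
  show ((2⁻¹ : ℂ) • (A + Aᴴ))ᴴ = (2⁻¹ : ℂ) • (A + Aᴴ)
  rw [Matrix.conjTranspose_smul, Matrix.conjTranspose_add,
    Matrix.conjTranspose_conjTranspose, add_comm Aᴴ A]
  simp

/-- The `j`-th largest element of `v` (descending sort). -/
def nthLargest (v : Fin n → ℝ) (j : Fin n) : ℝ :=
  ((List.ofFn v).mergeSort (fun a b => decide (b ≤ a))).get
    (Fin.cast (by simp) j)

/-- `j`-th largest eigenvalue of a Hermitian matrix. -/
def eigDesc {A : Matrix (Fin n) (Fin n) ℂ} (hA : A.IsHermitian) (j : Fin n) : ℝ :=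
  nthLargest hA.eigenvalues j

/-- `j`-th largest singular value. -/
def singular (A : Matrix (Fin n) (Fin n) ℂ) (j : Fin n) : ℝ :=
  nthLargest (fun i => Real.sqrt ((Matrix.isHermitian_conjTranspose_mul_self A).eigenvalues i)) j

/-- Square root of a positive semidefinite matrix (the former `Matrix.PosSemidef.sqrt`). -/
def psdSqrt {A : Matrix (Fin n) (Fin n) ℂ} (hA : A.PosSemidef) : Matrix (Fin n) (Fin n) ℂ :=
  (hA.1.eigenvectorUnitary : Matrix (Fin n) (Fin n) ℂ) *
    diagonal ((↑) ∘ (Real.sqrt ·) ∘ hA.1.eigenvalues) *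
    (star hA.1.eigenvectorUnitary : Matrix (Fin n) (Fin n) ℂ)

/-- Weighted geometric mean of positive definite matrices. -/
def sharp (v : ℝ) {A B : Matrix (Fin n) (Fin n) ℂ} (hA : A.PosDef) (hB : B.PosDef) :
    Matrix (Fin n) (Fin n) ℂ :=
  psdSqrt hA.posSemidef *
    (Matrix.isHermitian_mul_mul_conjTranspose (psdSqrt hA.posSemidef)⁻¹ hB.1).cfc
      (fun x => Real.rpow x v) * psdSqrt hA.posSemidef

/-- Weighted arithmetic mean. -/
def arith (v : ℝ) (A B : Matrix (Fin n) (Fin n) ℂ) : Matrix (Fin n) (Fin n) ℂ :=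
  (1 - v) • A + v • B

/-- Weighted harmonic mean. -/
def harm (v : ℝ) (A B : Matrix (Fin n) (Fin n) ℂ) : Matrix (Fin n) (Fin n) ℂ :=
  ((1 - v) • A⁻¹ + v • B⁻¹)⁻¹

/-- Kantorovich constant. -/
def K (h : ℝ) : ℝ := (h + 1) ^ 2 / (4 * h)

end Paper

end

/-
Write `A = H + iK` with `H = Re A ≥ 0` and `K` Hermitian, and factor `H = B* B`. If `B` is
invertible then `A = B* (1 + iM) B` with `M = B⁻* K B⁻¹` Hermitian, so
`|det A| = det H · |det (1 + iM)|`, and `det (1 + iM) = ∏ (1 + iλⱼ)` over the real eigenvalues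
`λⱼ` of `M`, each factor having modulus at least `1`.
-/

open scoped MatrixOrder ComplexStarModule

namespace Matrix

variable {ι : Type*} [Fintype ι] [DecidableEq ι]

theorem det_conjStarAlgAut {R : Type*} [CommRing R] [StarRing R] (U : unitary (Matrix ι ι R))
    (X : Matrix ι ι R) : (Unitary.conjStarAlgAut R _ U X).det = X.det := by
  rw [Unitary.conjStarAlgAut_apply, det_mul_comm, ← mul_assoc, Unitary.coe_star_mul_self, one_mul]

theorem IsHermitian.det_one_add_I_smul {M : Matrix ι ι ℂ} (hM : M.IsHermitian) :
    (1 + Complex.I • M).det = ∏ i, (1 + Complex.I * hM.eigenvalues i) := by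
  conv_lhs =>
    rw [hM.spectral_theorem, ← map_one (Unitary.conjStarAlgAut ℂ _ hM.eigenvectorUnitary),
      ← map_smul, ← map_add, det_conjStarAlgAut, ← diagonal_one, ← diagonal_smul,
      diagonal_add, det_diagonal]
  rfl

theorem IsHermitian.one_le_norm_det_one_add_I_smul {M : Matrix ι ι ℂ} (hM : M.IsHermitian) :
    1 ≤ ‖(1 + Complex.I • M).det‖ := by
  rw [hM.det_one_add_I_smul, norm_prod]
  refine Finset.one_le_prod fun i _ ↦ ?_
  simpa using Complex.re_le_norm (1 + Complex.I * hM.eigenvalues i)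

theorem PosSemidef.norm_det_le_norm_det_add_I_smul {H K : Matrix ι ι ℂ} (hH : H.PosSemidef)
    (hK : K.IsHermitian) : ‖H.det‖ ≤ ‖(H + Complex.I • K).det‖ := by
  obtain ⟨B, rfl⟩ := CStarAlgebra.nonneg_iff_eq_star_mul_self.mp hH.nonneg
  by_cases hB : B.det = 0
  · simp [det_mul, hB]
  set M := (B⁻¹)ᴴ * K * B⁻¹
  have hM : M.IsHermitian := isHermitian_conjTranspose_mul_mul B⁻¹ hK
  have hfactor : star B * B + Complex.I • K = star B * (1 + Complex.I • M) * B := by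
    have hBu : IsUnit B.det := isUnit_iff_ne_zero.mpr hB
    rw [Matrix.mul_add, Matrix.add_mul, mul_one, Matrix.mul_smul, Matrix.smul_mul]
    simp only [M, star_eq_conjTranspose, ← mul_assoc, ← conjTranspose_mul,
      nonsing_inv_mul _ hBu, conjTranspose_one, one_mul]
    rw [mul_assoc, nonsing_inv_mul _ hBu, mul_one]
  calc ‖(star B * B).det‖ = ‖(star B * B).det‖ * 1 := (mul_one _).symm
    _ ≤ ‖(star B * B).det‖ * ‖(1 + Complex.I • M).det‖ := by
      gcongr; exact hM.one_le_norm_det_one_add_I_smul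
    _ = ‖(star B * B + Complex.I • K).det‖ := by
      rw [hfactor, det_mul, det_mul, det_mul]
      simp only [norm_mul]; ring

end Matrix

namespace Paper

variable {n : ℕ}

theorem re_eq_realPart (A : Matrix (Fin n) (Fin n) ℂ) : re A = ℜ A := by
  rw [realPart_apply_coe, ← Complex.coe_smul, Complex.ofReal_inv, Complex.ofReal_ofNat]
  rfl

/-- Ostrowski–Taussky inequality. -/
theorem det_re_le_abs_det (A : Matrix (Fin n) (Fin n) ℂ) (hA : (re A).PosDef) :
    ((re A).det).re ≤ ‖A.det‖ := by
  rw [re_eq_realPart] at hA ⊢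
  calc _ ≤ ‖(ℜ A : Matrix (Fin n) (Fin n) ℂ).det‖ := Complex.re_le_norm _
    _ ≤ ‖((ℜ A : Matrix (Fin n) (Fin n) ℂ) + Complex.I • ↑(ℑ A)).det‖ :=
        hA.posSemidef.norm_det_le_norm_det_add_I_smul (ℑ A).prop
    _ = ‖A.det‖ := by rw [realPart_add_I_smul_imaginaryPart]

end Paper
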